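/- Let Q be the symmetric integer 6×6 matrix with rows (2,1,1,1,1,1), (1,0,1,0,0,1), (1,1,0,1,0,0), (1,0,1,0,1,0), (1,0,0,1,0,1), (1,1,0,0,1,0), and let T be the permutation matrix fixing the first standard basis vector of ℤ^6 and cyclically permuting the remaining five. Then: (i) vᵀ Q v ∈ 2ℤ for every v ∈ ℤ^6 (Q is even); (ii) Tᵀ Q T = Q (the form is invariant under the order-5 action of T); (iii) there exists U ∈ GL_6(ℤ) with Uᵀ Q U equal to the block diagonal matrix H ⊕ H ⊕ H, where H = [[0,1],[1,0]] (in particular Q is unimodular); (iv) the sublattice {v ∈ ℤ^6 : Tv = v} has rank 2 and the restriction of the form Q to it is indefinite and nondegenerate over ℝ, of signature (1,1). -/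

import Mathlib

open Matrix

/-- The matrix `Q` of Lemma 4.3 with respect to the basis `{f, e, ge, g²e, g³e, g⁴e}`. -/
def Qmat : Matrix (Fin 6) (Fin 6) ℤ :=
  !![2, 1, 1, 1, 1, 1;
     1, 0, 1, 0, 0, 1;
     1, 1, 0, 1, 0, 0;
     1, 0, 1, 0, 1, 0;
     1, 0, 0, 1, 0, 1;
     1, 1, 0, 0, 1, 0]

/-- The permutation matrix fixing the first standard basis vector of `ℤ⁶` and cyclically
permuting the remaining five. -/
def Tmat : Matrix (Fin 6) (Fin 6) ℤ :=
  !![1, 0, 0, 0, 0, 0;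
     0, 0, 0, 0, 0, 1;
     0, 1, 0, 0, 0, 0;
     0, 0, 1, 0, 0, 0;
     0, 0, 0, 1, 0, 0;
     0, 0, 0, 0, 1, 0]

/-- The orthogonal sum `H ⊕ H ⊕ H` of three hyperbolic planes `H = [[0,1],[1,0]]`. -/
def HHHmat : Matrix (Fin 6) (Fin 6) ℤ :=
  !![0, 1, 0, 0, 0, 0;
     1, 0, 0, 0, 0, 0;
     0, 0, 0, 1, 0, 0;
     0, 0, 1, 0, 0, 0;
     0, 0, 0, 0, 0, 1;
     0, 0, 0, 0, 1, 0]

/-!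
Being symmetric with even diagonal, `Q = A + Aᵀ` for an integer matrix `A`, hence `Q` is even.
The columns of `U` below form three mutually orthogonal hyperbolic pairs of `Q`, namely
`(e, ge)`, `(g³e, g⁴e - ge)` and `(f - e - g⁴e, ge + g²e + g³e - f)`; since `H ⊕ H ⊕ H` is an
involution, `det U` is a unit. The vectors fixed by `T` are the integer combinations of `f` and
`N = e + ge + ⋯ + g⁴e`, on which `Q` has Gram matrix `[[2, 5], [5, 10]]` of determinant `-5`.
-/

namespace Matrix

variable {n m R : Type*}

theorem IsSymm.exists_eq_add_transpose [AddCommMonoid R] [LinearOrder n] {Q : Matrix n n R}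
    (hQ : Q.IsSymm) (hdiag : ∀ i, Even (Q i i)) : ∃ A : Matrix n n R, Q = A + Aᵀ := by
  choose d hd using hdiag
  refine ⟨of fun i j => if i < j then Q i j else if i = j then d i else 0, ?_⟩
  ext i j
  rcases lt_trichotomy i j with h | rfl | h
  · simp [h, h.not_gt, h.ne']
  · simp [hd]
  · simp [h, h.not_gt, h.ne', hQ.apply]

theorem even_dotProduct_mulVec_self [CommSemiring R] [Fintype n] [LinearOrder n]
    {Q : Matrix n n R} (hQ : Q.IsSymm) (hdiag : ∀ i, Even (Q i i)) (v : n → R) :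
    Even (v ⬝ᵥ Q *ᵥ v) := by
  obtain ⟨A, rfl⟩ := hQ.exists_eq_add_transpose hdiag
  rw [add_mulVec, dotProduct_add, dotProduct_transpose_mulVec]
  exact ⟨_, rfl⟩

theorem isUnit_det_of_transpose_mul_mul_eq [CommRing R] [Fintype n] [DecidableEq n]
    {Q U H : Matrix n n R} (h : Uᵀ * Q * U = H) (hH : IsUnit H.det) : IsUnit U.det := by
  rw [← h, det_mul] at hH
  exact isUnit_of_mul_isUnit_right hH

theorem mulVec_dotProduct_mulVec_mulVec [CommSemiring R] [Fintype n] [Fintype m]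
    (F : Matrix n m R) (Q : Matrix n n R) (c d : m → R) :
    F *ᵥ c ⬝ᵥ Q *ᵥ F *ᵥ d = c ⬝ᵥ (Fᵀ * Q * F) *ᵥ d := by
  rw [dotProduct_mulVec, ← vecMul_transpose, vecMul_vecMul, ← dotProduct_mulVec, mulVec_mulVec]

end Matrix

theorem Qmat_isSymm : Qmat.IsSymm := by decide

theorem even_Qmat_apply_self (i : Fin 6) : Even (Qmat i i) := by
  fin_cases i <;> decide

theorem Tmat_pow_five : Tmat ^ 5 = 1 := by decide

theorem transpose_Tmat_mul_Qmat_mul_Tmat : Tmatᵀ * Qmat * Tmat = Qmat := by decide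

def Umat : Matrix (Fin 6) (Fin 6) ℤ :=
  !![0, 0, 0, 0, 1, -1;
     1, 0, 0, 0, -1, 0;
     0, 1, 0, -1, 0, 1;
     0, 0, 0, 0, 0, 1;
     0, 0, 1, 0, 0, 1;
     0, 0, 0, 1, -1, 0]

theorem transpose_Umat_mul_Qmat_mul_Umat : Umatᵀ * Qmat * Umat = HHHmat := by decide

theorem HHHmat_mul_self : HHHmat * HHHmat = 1 := by decide

theorem isUnit_det_Umat : IsUnit Umat.det :=
  isUnit_det_of_transpose_mul_mul_eq transpose_Umat_mul_Qmat_mul_Umat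
    (isUnit_det_of_right_inverse HHHmat_mul_self)

def fixedBasis : Matrix (Fin 6) (Fin 2) ℤ :=
  !![1, 0;
     0, 1;
     0, 1;
     0, 1;
     0, 1;
     0, 1]

theorem Tmat_mul_fixedBasis : Tmat * fixedBasis = fixedBasis := by decide

theorem fixedBasis_mulVec (c : Fin 2 → ℤ) :
    fixedBasis *ᵥ c = ![c 0, c 1, c 1, c 1, c 1, c 1] := by
  ext i
  fin_cases i <;> simp [fixedBasis, mulVec, dotProduct]

theorem fixedBasis_mulVec_injective : Function.Injective fixedBasis.mulVec := by
  intro c d h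
  simp only [fixedBasis_mulVec, vecCons_inj] at h
  ext i
  fin_cases i
  exacts [h.1, h.2.1]

theorem Tmat_mulVec (v : Fin 6 → ℤ) : Tmat *ᵥ v = ![v 0, v 5, v 1, v 2, v 3, v 4] := by
  ext i
  fin_cases i <;> simp [Tmat, mulVec, dotProduct, Fin.sum_univ_six]

theorem Tmat_mulVec_eq_self_iff {v : Fin 6 → ℤ} :
    Tmat *ᵥ v = v ↔ ∃ c, fixedBasis *ᵥ c = v := by
  constructor
  · intro hv
    rw [Tmat_mulVec, funext_iff] at hv
    have h2 := hv 2
    have h3 := hv 3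
    have h4 := hv 4
    have h5 := hv 5
    simp only [Fin.isValue, cons_val] at h2 h3 h4 h5
    refine ⟨![v 0, v 1], ?_⟩
    rw [fixedBasis_mulVec]
    ext i
    fin_cases i <;> simp [h2, h3, h4, h5]
  · rintro ⟨c, rfl⟩
    rw [mulVec_mulVec, Tmat_mul_fixedBasis]

theorem ker_Tmat_sub_id :
    LinearMap.ker (Tmat.mulVecLin - LinearMap.id) = LinearMap.range fixedBasis.mulVecLin := by
  ext v
  simp [sub_eq_zero, Tmat_mulVec_eq_self_iff]

theorem finrank_ker_Tmat_sub_id :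
    Module.finrank ℤ (LinearMap.ker (Tmat.mulVecLin - LinearMap.id)) = 2 := by
  rw [ker_Tmat_sub_id, LinearMap.finrank_range_of_inj fixedBasis_mulVec_injective,
    Module.finrank_fin_fun]

theorem transpose_fixedBasis_mul_Qmat_mul_fixedBasis :
    fixedBasisᵀ * Qmat * fixedBasis = !![2, 5; 5, 10] := by decide

theorem eq_zero_of_fixed_of_forall_fixed_orthogonal {v : Fin 6 → ℤ} (hv : Tmat *ᵥ v = v)
    (horth : ∀ w : Fin 6 → ℤ, Tmat *ᵥ w = w → v ⬝ᵥ Qmat *ᵥ w = 0) : v = 0 := by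
  obtain ⟨c, rfl⟩ := Tmat_mulVec_eq_self_iff.mp hv
  have hdet : (!![2, 5; 5, 10] : Matrix (Fin 2) (Fin 2) ℤ).det ≠ 0 := by
    rw [det_fin_two_of]; norm_num
  have hc : c = 0 := by
    refine (nondegenerate_def.mp (nondegenerate_of_det_ne_zero hdet)).1 c fun d => ?_
    rw [← transpose_fixedBasis_mul_Qmat_mul_fixedBasis, ← mulVec_dotProduct_mulVec_mulVec]
    exact horth _ (Tmat_mulVec_eq_self_iff.mpr ⟨d, rfl⟩)
  rw [hc, mulVec_zero]

/-- Lemma 4.3 : the form `Q` is even, invariant under the order-5 action of `T`,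
equivalent over `ℤ` to `H ⊕ H ⊕ H` (in particular unimodular), and its restriction to the
rank-2 fixed sublattice of `T` is indefinite and nondegenerate, of signature `(1,1)`. -/
theorem stmt6 :
    (∀ v : Fin 6 → ℤ, ∃ a : ℤ, v ⬝ᵥ Qmat.mulVec v = 2 * a) ∧
    (Tmatᵀ * Qmat * Tmat = Qmat ∧ Tmat ^ 5 = 1) ∧
    (∃ U : Matrix (Fin 6) (Fin 6) ℤ, IsUnit U.det ∧ Uᵀ * Qmat * U = HHHmat) ∧
    (Module.finrank ℤ
        (LinearMap.ker (Tmat.mulVecLin - (LinearMap.id : (Fin 6 → ℤ) →ₗ[ℤ] Fin 6 → ℤ))) = 2 ∧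
      (∃ v : Fin 6 → ℤ, Tmat.mulVec v = v ∧ 0 < v ⬝ᵥ Qmat.mulVec v) ∧
      (∃ w : Fin 6 → ℤ, Tmat.mulVec w = w ∧ w ⬝ᵥ Qmat.mulVec w < 0) ∧
      (∀ v : Fin 6 → ℤ, Tmat.mulVec v = v →
        (∀ w : Fin 6 → ℤ, Tmat.mulVec w = w → v ⬝ᵥ Qmat.mulVec w = 0) → v = 0)) := by
  refine ⟨fun v => even_iff_two_dvd.mp (even_dotProduct_mulVec_self Qmat_isSymm
      even_Qmat_apply_self v), ⟨transpose_Tmat_mul_Qmat_mul_Tmat, Tmat_pow_five⟩,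
    ⟨Umat, isUnit_det_Umat, transpose_Umat_mul_Qmat_mul_Umat⟩, finrank_ker_Tmat_sub_id,
    ⟨![1, 0, 0, 0, 0, 0], by decide, by decide⟩, ⟨![-2, 1, 1, 1, 1, 1], by decide, by decide⟩,
    fun v hv horth => eq_zero_of_fixed_of_forall_fixed_orthogonal hv horth⟩
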